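/- arXiv:1603.05748 — 3 statements merged into one kernel-verified Lean document; each statement's English description precedes it below -/
import Mathlib

section
/- For every positive integer n, S_3(n) = n²·C(2n, n), where S_r(n) = ∑_{j=0}^{2n} C(2n, j)·|n−j|^r. -/
/-!
By Pascal's rule applied twice, `C(2n+2, j) = C(2n, j) + 2 C(2n, j-1) + C(2n, j-2)`, so the
binomially weighted sum `∑_j C(2n+2, j) f(n+1-j)` equals `∑_j C(2n, j) g(n-j)` with
`g a = f(a+1) + 2 f(a) + f(a-1)`. For `f = |·|` and `f = |·|³` one has
`g a = 4|a| + 2[a = 0]` and `g a = 4|a|³ + 6|a| + 2[a = 0]`, whence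
`S₁(n+1) = 4 S₁(n) + 2 C(2n, n)` and `S₃(n+1) = 4 S₃(n) + 6 S₁(n) + 2 C(2n, n)`.
Induction with `(n+1) C(2n+2, n+1) = 2(2n+1) C(2n, n)` gives `S₁(n) = n C(2n, n)` and then
`S₃(n) = n² C(2n, n)`.
-/

/-- `S r n = ∑_{j=0}^{2n} C(2n, j) |n - j|^r`. -/
def S (r n : ℕ) : ℤ :=
  ∑ j ∈ Finset.range (2 * n + 1), (Nat.choose (2 * n) j : ℤ) * |(n : ℤ) - (j : ℤ)| ^ r

open Finset

lemma sum_range_choose_succ_mul {R : Type*} [CommSemiring R] (m : ℕ) (g : ℕ → R) :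
    ∑ j ∈ range (m + 2), (m + 1).choose j * g j =
      ∑ j ∈ range (m + 1), m.choose j * (g j + g (j + 1)) := by
  have shift : ∑ j ∈ range (m + 1), (m.choose j : R) * g j =
      g 0 + ∑ j ∈ range (m + 1), (m.choose (j + 1) : R) * g (j + 1) := by
    rw [sum_range_succ', sum_range_succ _ m, Nat.choose_succ_self, Nat.cast_zero, zero_mul,
      add_zero, Nat.choose_zero_right, Nat.cast_one, one_mul, add_comm]
  rw [sum_range_succ']
  simp only [Nat.choose_succ_succ, Nat.cast_add, add_mul, mul_add, sum_add_distrib,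
    Nat.choose_zero_right, Nat.cast_one, one_mul, shift]
  ring

def centralBinomSum (n : ℕ) (f : ℤ → ℤ) : ℤ :=
  ∑ j ∈ range (2 * n + 1), (2 * n).choose j * f (n - j)

lemma centralBinomSum_succ (n : ℕ) (f : ℤ → ℤ) :
    centralBinomSum (n + 1) f =
      centralBinomSum n (fun a => f (a + 1) + 2 * f a + f (a - 1)) := by
  have h2n : 2 * (n + 1) = 2 * n + 1 + 1 := by ring
  rw [centralBinomSum, h2n, sum_range_choose_succ_mul, sum_range_choose_succ_mul]
  refine sum_congr rfl fun j _ => ?_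
  push_cast
  ring_nf

lemma centralBinomSum_add (n : ℕ) (f g : ℤ → ℤ) :
    centralBinomSum n (fun a => f a + g a) = centralBinomSum n f + centralBinomSum n g := by
  simp only [centralBinomSum, mul_add, sum_add_distrib]

lemma centralBinomSum_const_mul (n : ℕ) (c : ℤ) (f : ℤ → ℤ) :
    centralBinomSum n (fun a => c * f a) = c * centralBinomSum n f := by
  simp only [centralBinomSum, mul_sum]
  exact sum_congr rfl fun _ _ => by ring

lemma centralBinomSum_ite_eq_zero (n : ℕ) (c : ℤ) :
    centralBinomSum n (fun a => if a = 0 then c else 0) = c * (2 * n).choose n := by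
  have hcond (j : ℕ) : (n : ℤ) - j = 0 ↔ j = n := by omega
  simp only [centralBinomSum, hcond, mul_ite, mul_zero, sum_ite_eq', mem_range]
  rw [if_pos (by omega), mul_comm]

lemma abs_add_one_add_two_mul_abs_add_abs_sub_one (a : ℤ) :
    |a + 1| + 2 * |a| + |a - 1| = 4 * |a| + if a = 0 then 2 else 0 := by
  rcases lt_trichotomy a 0 with h | rfl | h
  · rw [abs_of_neg h, abs_of_nonpos (by omega : a + 1 ≤ 0), abs_of_neg (by omega : a - 1 < 0),
      if_neg h.ne]
    ring
  · norm_num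
  · rw [abs_of_pos h, abs_of_pos (by omega : 0 < a + 1), abs_of_nonneg (by omega : 0 ≤ a - 1),
      if_neg h.ne']
    ring

lemma abs_add_one_pow_three_add_two_mul_abs_pow_three_add_abs_sub_one_pow_three (a : ℤ) :
    |a + 1| ^ 3 + 2 * |a| ^ 3 + |a - 1| ^ 3 = 4 * |a| ^ 3 + 6 * |a| + if a = 0 then 2 else 0 := by
  rcases lt_trichotomy a 0 with h | rfl | h
  · rw [abs_of_neg h, abs_of_nonpos (by omega : a + 1 ≤ 0), abs_of_neg (by omega : a - 1 < 0),
      if_neg h.ne]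
    ring
  · norm_num
  · rw [abs_of_pos h, abs_of_pos (by omega : 0 < a + 1), abs_of_nonneg (by omega : 0 ≤ a - 1),
      if_neg h.ne']
    ring

lemma S_eq_centralBinomSum (r n : ℕ) : S r n = centralBinomSum n (fun a => |a| ^ r) := rfl

lemma S_one_succ (n : ℕ) : S 1 (n + 1) = 4 * S 1 n + 2 * (2 * n).choose n := by
  simp only [S_eq_centralBinomSum, centralBinomSum_succ, pow_one,
    abs_add_one_add_two_mul_abs_add_abs_sub_one, centralBinomSum_add, centralBinomSum_const_mul,
    centralBinomSum_ite_eq_zero]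

lemma S_three_succ (n : ℕ) :
    S 3 (n + 1) = 4 * S 3 n + 6 * S 1 n + 2 * (2 * n).choose n := by
  simp only [S_eq_centralBinomSum, centralBinomSum_succ, pow_one,
    abs_add_one_pow_three_add_two_mul_abs_pow_three_add_abs_sub_one_pow_three, centralBinomSum_add,
    centralBinomSum_const_mul, centralBinomSum_ite_eq_zero]

lemma succ_mul_choose_two_mul_succ (n : ℕ) :
    ((n : ℤ) + 1) * (2 * (n + 1)).choose (n + 1) = 2 * (2 * n + 1) * (2 * n).choose n := by
  exact_mod_cast Nat.succ_mul_centralBinom_succ n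

lemma S_one (n : ℕ) : S 1 n = n * (2 * n).choose n := by
  induction n with
  | zero => rfl
  | succ n ih =>
    rw [S_one_succ, ih]
    push_cast
    linear_combination -succ_mul_choose_two_mul_succ n

lemma S_three (n : ℕ) : S 3 n = n ^ 2 * (2 * n).choose n := by
  induction n with
  | zero => rfl
  | succ n ih =>
    rw [S_three_succ, ih, S_one]
    push_cast
    linear_combination -((n : ℤ) + 1) * succ_mul_choose_two_mul_succ n

theorem stmt_4 :
    ∀ n : ℕ, 1 ≤ n → S 3 n = (n : ℤ) ^ 2 * (Nat.choose (2 * n) n : ℤ) :=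
  fun n _ => S_three n
end

section
/- For all integers j ≥ 1 and k ≥ j, the rational number c(j,k) = (j!/(2j−1)!)·∑_{q=1}^{j} (−1)^{q+j} B(j,q) q^{2k−1}, where B(j,q) = (q/j)·C(2j, j−q), is an integer. -/
/-- The Catalan triangle numbers `B(j,q) = (q/j) * C(2j, j-q)`. -/
noncomputable def catalanTriangle (j q : ℕ) : ℚ :=
  ((q : ℚ) / (j : ℚ)) * (Nat.choose (2 * j) (j - q) : ℚ)

/-- The coefficients `c(j,k) = (j!/(2j-1)!) * ∑_{q=1}^{j} (-1)^(q+j) B(j,q) q^(2k-1)`. -/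
noncomputable def tuenterCoeff (j k : ℕ) : ℚ :=
  ((Nat.factorial j : ℚ) / (Nat.factorial (2 * j - 1) : ℚ)) *
    ∑ q ∈ Finset.Icc 1 j, (-1 : ℚ) ^ (q + j) * catalanTriangle j q * (q : ℚ) ^ (2 * k - 1)

/-! We have `c(j,k) = j! · Δ^{2j}[x ↦ x^{2k}](-j) / (2j)!`: folding this central difference of the
even function `x^{2k}` about its centre `0` gives twice the Catalan-triangle sum. The `n`-th forward
difference of `x^m` is divisible by `n!`, by induction on `m` using the Leibniz rule
`Δ^{n+1}[x·g](y) = y·Δ^{n+1}g(y) + (n+1)·Δ^n g(y+1)`. -/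

open Finset fwdDiff
open scoped Nat

theorem fwdDiff_iter_succ_id_mul {R : Type*} [CommRing R] (g : R → R) (n : ℕ) (y : R) :
    (Δ_[1])^[n + 1] (fun x ↦ x * g x) y =
      y * (Δ_[1])^[n + 1] g y + (n + 1) * (Δ_[1])^[n] g (y + 1) := by
  induction n generalizing y with
  | zero =>
    simp only [zero_add, Function.iterate_one, Function.iterate_zero, id, fwdDiff]
    push_cast
    ring
  | succ n ih =>
    rw [Function.iterate_succ_apply', fwdDiff, ih, ih]
    simp only [Function.iterate_succ_apply' _ (n + 1), Function.iterate_succ_apply' _ n, fwdDiff]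
    push_cast
    ring

theorem factorial_dvd_fwdDiff_iter_pow {R : Type*} [CommRing R] (m n : ℕ) (y : R) :
    (n ! : R) ∣ (Δ_[1])^[n] (fun x ↦ x ^ m) y := by
  induction m generalizing n y with
  | zero =>
    cases n with
    | zero => simp
    | succ n => rw [fwdDiff_iter_pow_eq_zero_of_lt n.succ_pos]; exact dvd_zero _
  | succ m ih =>
    cases n with
    | zero => simp
    | succ n =>
      simp_rw [_root_.pow_succ']
      rw [fwdDiff_iter_succ_id_mul]
      refine dvd_add (dvd_mul_of_dvd_right (ih _ _) _) ?_
      rw [Nat.factorial_succ, Nat.cast_mul, Nat.cast_succ]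
      exact mul_dvd_mul_left _ (ih _ _)

theorem sum_range_two_mul_add_one {M : Type*} [AddCommMonoid M] (g : ℕ → M) (j : ℕ) :
    ∑ i ∈ range (2 * j + 1), g i = g j + ∑ q ∈ Icc 1 j, (g (j - q) + g (j + q)) := by
  rw [two_mul, add_assoc, sum_range_add, sum_range_succ', ← sum_range_reflect,
    ← Ico_add_one_right_eq_Icc, sum_Ico_eq_sum_range, add_tsub_cancel_right, sum_add_distrib,
    add_zero]
  simp only [Nat.sub_sub, add_comm 1]
  abel

theorem fwdDiff_iter_two_mul_pow_two_mul (j : ℕ) {k : ℕ} (hk : k ≠ 0) :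
    (Δ_[1])^[2 * j] (fun x : ℤ ↦ x ^ (2 * k)) (-j) =
      2 * ∑ q ∈ Icc 1 j, (-1) ^ (q + j) * ((2 * j).choose (j - q) : ℤ) * (q : ℤ) ^ (2 * k) := by
  rw [fwdDiff_iter_eq_sum_shift, sum_range_two_mul_add_one, mul_sum]
  simp only [nsmul_eq_mul, mul_one, smul_eq_mul, neg_add_cancel, zero_pow (by omega : 2 * k ≠ 0),
    mul_zero, zero_add]
  refine sum_congr rfl fun q hq => ?_
  have hqj := (mem_Icc.mp hq).2
  have hsign : (-1 : ℤ) ^ (j - q) = (-1) ^ (q + j) := by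
    rw [show q + j = (j - q) + 2 * q by omega, pow_add, pow_mul, neg_one_sq, one_pow, mul_one]
  rw [show 2 * j - (j - q) = q + j by omega, show 2 * j - (j + q) = j - q by omega, hsign,
    Nat.choose_symm_of_eq_add (show 2 * j = (j + q) + (j - q) by omega), Nat.cast_sub hqj]
  push_cast
  rw [show -(j : ℤ) + (j - q) = -q by ring, (even_two_mul k).neg_pow]
  ring

theorem tuenterCoeff_eq_fwdDiff_iter {j k : ℕ} (hj : j ≠ 0) (hk : k ≠ 0) :
    tuenterCoeff j k =
      j ! / (2 * j)! * (((Δ_[1])^[2 * j] (fun x : ℤ ↦ x ^ (2 * k)) (-j) : ℤ) : ℚ) := by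
  have hfac : ((2 * j)! : ℚ) = 2 * j * (2 * j - 1)! := by
    rw [← Nat.mul_factorial_pred (by omega : 2 * j ≠ 0)]
    push_cast
    ring
  rw [fwdDiff_iter_two_mul_pow_two_mul j hk, tuenterCoeff, hfac]
  push_cast
  rw [mul_sum, mul_sum, mul_sum]
  refine sum_congr rfl fun q _ => ?_
  rw [catalanTriangle, ← pow_sub_one_mul (by omega : 2 * k ≠ 0) (q : ℚ)]
  field_simp

theorem stmt_13 :
    ∀ j : ℕ, 1 ≤ j → ∀ k : ℕ, j ≤ k → ∃ m : ℤ, tuenterCoeff j k = (m : ℚ) := by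
  intro j hj k hk
  obtain ⟨a, ha⟩ := factorial_dvd_fwdDiff_iter_pow (2 * k) (2 * j) (-j : ℤ)
  refine ⟨j ! * a, ?_⟩
  rw [tuenterCoeff_eq_fwdDiff_iter (by omega) (by omega), ha]
  push_cast
  field_simp
end

section
/- For every integer j ≥ 1, F_3(j) = (1/45360)·j(j+1)(j+2)(j+3)(2j+1)(2j+3)(2j+5)(35j²−21j+4), where F_3(j) = 1 + ∑_{2≤λ_1≤j} λ_1² + ∑_{2≤λ_1≤λ_2≤j} λ_1²λ_2² + ∑_{2≤λ_1≤λ_2≤λ_3≤j} λ_1²λ_2²λ_3². -/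
/-!
`F k j` is the sum of the complete homogeneous symmetric polynomials `h₀, …, h_k` evaluated at
`2², …, j²`. Splitting the multisets according to whether they contain `j` gives
`F (k+1) j = F (k+1) (j-1) + j² F k j`, so the closed forms of `F 1`, `F 2` and `F 3` follow in
turn by induction on `j`, starting from `F k 1 = 1`.
-/

/-- `F k j = ∑_{i=0}^{k} ∑_{2 ≤ λ₁ ≤ ⋯ ≤ λᵢ ≤ j} λ₁² ⋯ λᵢ²`, where the inner sum runs over
weakly increasing `i`-tuples with entries in `[2, j]`, encoded as multisets of size `i`
with elements in `Finset.Icc 2 j`; the `i = 0` term is `1`. -/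
def F (k j : ℕ) : ℕ :=
  ∑ i ∈ Finset.range (k + 1),
    ∑ m ∈ (Finset.Icc 2 j).sym i, ((m : Multiset ℕ).map (fun x => x ^ 2)).prod

open Finset

namespace Finset

variable {α : Type*} [DecidableEq α]

theorem filter_mem_sym_succ {s : Finset α} {a : α} (ha : a ∈ s) (n : ℕ) :
    (s.sym (n + 1)).filter (a ∈ ·) = (s.sym n).image (Sym.cons a) := by
  ext m
  simp only [mem_filter, mem_image, mem_sym_iff]
  constructor
  · rintro ⟨hm, ham⟩
    refine ⟨m.erase a ham, fun b hb => hm b ?_, Sym.cons_erase ham⟩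
    rw [← Sym.mem_coe, Sym.coe_erase] at hb
    exact Multiset.mem_of_mem_erase hb
  · rintro ⟨m', hm', rfl⟩
    refine ⟨fun b hb => ?_, Sym.mem_cons_self a m'⟩
    rcases Sym.mem_cons.mp hb with rfl | hb
    exacts [ha, hm' b hb]

theorem filter_not_mem_sym (s : Finset α) (a : α) (n : ℕ) :
    (s.sym n).filter (a ∉ ·) = (s.erase a).sym n := by
  ext m
  simp only [mem_filter, mem_sym_iff, mem_erase]
  exact ⟨fun ⟨hm, ham⟩ b hb => ⟨fun hba => ham (hba ▸ hb), hm b hb⟩,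
    fun hm => ⟨fun b hb => (hm b hb).2, fun ham => (hm a ham).1 rfl⟩⟩

end Finset

section CompleteHomogeneous

variable {α R : Type*} [DecidableEq α] [CommSemiring R]

/-- The complete homogeneous symmetric polynomial `hₙ` evaluated at the family `(f a)_{a ∈ s}`. -/
def completeHomogeneous (f : α → R) (s : Finset α) (n : ℕ) : R :=
  ∑ m ∈ s.sym n, ((m : Multiset α).map f).prod

@[simp]
theorem completeHomogeneous_zero (f : α → R) (s : Finset α) : completeHomogeneous f s 0 = 1 := by
  simp [completeHomogeneous, sym_zero, Sym.eq_nil_of_card_zero, Sym.coe_nil]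

@[simp]
theorem completeHomogeneous_empty_succ (f : α → R) (n : ℕ) :
    completeHomogeneous f ∅ (n + 1) = 0 := by
  simp [completeHomogeneous]

theorem completeHomogeneous_succ_of_mem (f : α → R) {s : Finset α} {a : α} (ha : a ∈ s)
    (n : ℕ) :
    completeHomogeneous f s (n + 1) =
      completeHomogeneous f (s.erase a) (n + 1) + f a * completeHomogeneous f s n := by
  unfold completeHomogeneous
  rw [← sum_filter_not_add_sum_filter _ (a ∈ ·), filter_not_mem_sym, filter_mem_sym_succ ha,
    sum_image fun x _ y _ h => (Sym.cons_inj_right a x y).mp h, mul_sum]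
  congr 1
  refine sum_congr rfl fun m _ => ?_
  rw [Sym.coe_cons, Multiset.map_cons, Multiset.prod_cons]

theorem sum_range_completeHomogeneous_empty (f : α → R) (k : ℕ) :
    ∑ i ∈ range (k + 1), completeHomogeneous f ∅ i = 1 := by
  simp [sum_range_succ']

theorem sum_range_completeHomogeneous_succ_of_mem (f : α → R) {s : Finset α} {a : α}
    (ha : a ∈ s) (k : ℕ) :
    ∑ i ∈ range (k + 2), completeHomogeneous f s i =
      ∑ i ∈ range (k + 2), completeHomogeneous f (s.erase a) i +
        f a * ∑ i ∈ range (k + 1), completeHomogeneous f s i := by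
  simp only [sum_range_succ' _ (k + 1), completeHomogeneous_succ_of_mem f ha, sum_add_distrib,
    completeHomogeneous_zero, mul_sum]
  ring

end CompleteHomogeneous

theorem F_eq_sum_completeHomogeneous (k j : ℕ) :
    F k j = ∑ i ∈ range (k + 1), completeHomogeneous (· ^ 2) (Icc 2 j) i :=
  rfl

theorem F_zero_left (j : ℕ) : F 0 j = 1 :=
  rfl

theorem F_one_right (k : ℕ) : F k 1 = 1 := by
  rw [F_eq_sum_completeHomogeneous, Icc_eq_empty (by norm_num),
    sum_range_completeHomogeneous_empty]

theorem F_succ_succ (k j : ℕ) (hj : 1 ≤ j) :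
    F (k + 1) (j + 1) = F (k + 1) j + (j + 1) ^ 2 * F k (j + 1) := by
  have hmem : j + 1 ∈ Icc 2 (j + 1) := mem_Icc.mpr ⟨by omega, le_rfl⟩
  have herase : (Icc 2 (j + 1)).erase (j + 1) = Icc 2 j := by
    rw [Icc_erase_right, Ico_add_one_right_eq_Icc]
  simp only [F_eq_sum_completeHomogeneous]
  rw [sum_range_completeHomogeneous_succ_of_mem _ hmem, herase]

theorem F_one (j : ℕ) (hj : 1 ≤ j) : (F 1 j : ℚ) = j * (j + 1) * (2 * j + 1) / 6 := by
  induction j, hj using Nat.le_induction with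
  | base => norm_num [F_one_right]
  | succ j hj ih =>
    rw [F_succ_succ 0 j hj, F_zero_left]
    push_cast
    rw [ih]
    ring

theorem F_two (j : ℕ) (hj : 1 ≤ j) :
    (F 2 j : ℚ) = j * (j + 1) * (j + 2) * (2 * j + 1) * (2 * j + 3) * (5 * j - 1) / 360 := by
  induction j, hj using Nat.le_induction with
  | base => norm_num [F_one_right]
  | succ j hj ih =>
    rw [F_succ_succ 1 j hj]
    push_cast
    rw [ih, F_one (j + 1) (by omega)]
    push_cast
    ring

theorem stmt_18 :
    ∀ j : ℕ, 1 ≤ j →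
      (F 3 j : ℚ) = (1 / 45360) * (j : ℚ) * ((j : ℚ) + 1) * ((j : ℚ) + 2) * ((j : ℚ) + 3) *
        (2 * (j : ℚ) + 1) * (2 * (j : ℚ) + 3) * (2 * (j : ℚ) + 5) *
        (35 * (j : ℚ) ^ 2 - 21 * (j : ℚ) + 4) := by
  intro j hj
  induction j, hj using Nat.le_induction with
  | base => norm_num [F_one_right]
  | succ j hj ih =>
    rw [F_succ_succ 2 j hj]
    push_cast
    rw [ih, F_two (j + 1) (by omega)]
    push_cast
    ring
end
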